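/- (The LR-UI process for the auditor's null is a test supermartingale.) Let (Ω, 𝓕, μ) be a probability space with μ a probability measure and (𝓕_t)_{t∈ℕ} a filtration. Let Y : ℕ → Ω → ℝ be a process with Y t taking values in {0,1} and Y t strongly 𝓕_t-measurable. Fix a budget m ∈ ℕ with m ≥ 1 and q ∈ (0,1), and let γ̂ : ℕ → Ω → ℝ be a predictable sequence of bets: γ̂ (t−1) is strongly 𝓕_{t−1}-measurable and takes values in [q, 1 − c] for some constant c > 0. Suppose that for every t ≥ m, μ[Y t | 𝓕_{t−1}] ≤ q holds μ-almost everywhere. Define M_t = 1 for t < m and, for t ≥ m, M_t = ∏_{k=m}^{t} ( Y k · (γ̂ (k−1)/q) + (1 − Y k) · ((1 − γ̂ (k−1))/(1 − q)) ). Then (M_t) is a nonnegative supermartingale with respect to (𝓕_t) and μ, with E[M_t] ≤ 1 for every t. -/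

import Mathlib

open MeasureTheory Finset

private lemma integrable_of_bdd {Ω : Type*} {m0 : MeasurableSpace Ω} {μ : Measure Ω}
    [IsFiniteMeasure μ] {f : Ω → ℝ} (hf : AEStronglyMeasurable f μ) {C : ℝ}
    (hC : ∀ ω, |f ω| ≤ C) : Integrable f μ :=
  ⟨hf, HasFiniteIntegral.of_bounded (C := C) (Filter.Eventually.of_forall hC)⟩

/-- The LR-UI process for the auditor's null is a test supermartingale: for binary
observations whose conditional mean is at most `q` from the budget time `m` onward,
and a predictable sequence of bets `γ̂` with values in `[q, 1 − c]` for some `c > 0`,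
the product (starting at time `m`, equal to `1` before) of one-step
Bernoulli(γ̂)/Bernoulli(q) likelihood ratios is a nonnegative supermartingale with
expectation at most `1` at every time. -/
theorem lr_ui_auditor_test_supermartingale
    {Ω : Type*} {m0 : MeasurableSpace Ω} (μ : Measure Ω) [IsProbabilityMeasure μ]
    (ℱ : Filtration ℕ m0) (Y : ℕ → Ω → ℝ)
    (hbin : ∀ t, ∀ ω, Y t ω = 0 ∨ Y t ω = 1)
    (hmeas : ∀ t, StronglyMeasurable[ℱ t] (Y t))
    (m : ℕ) (hm : 1 ≤ m)
    (q : ℝ) (hq0 : 0 < q) (hq1 : q < 1)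
    (γhat : ℕ → Ω → ℝ) (c : ℝ) (hc : 0 < c)
    (hγmeas : ∀ t ≥ 1, StronglyMeasurable[ℱ (t - 1)] (γhat (t - 1)))
    (hγrange : ∀ t ≥ 1, ∀ ω, γhat (t - 1) ω ∈ Set.Icc q (1 - c))
    (hnull : ∀ t ≥ m, ∀ᵐ ω ∂μ, (μ[Y t | ℱ (t - 1)]) ω ≤ q)
    (M : ℕ → Ω → ℝ)
    (hM : ∀ t ω, M t ω =
      ∏ k ∈ Finset.Icc m t,
        (Y k ω * (γhat (k - 1) ω / q) +
          (1 - Y k ω) * ((1 - γhat (k - 1) ω) / (1 - q)))) :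
    Supermartingale M ℱ μ ∧ (∀ t ω, 0 ≤ M t ω) ∧ ∀ t, (∫ ω, M t ω ∂μ) ≤ 1 := by
  set f : ℕ → Ω → ℝ := fun k ω =>
    Y k ω * (γhat (k - 1) ω / q) + (1 - Y k ω) * ((1 - γhat (k - 1) ω) / (1 - q)) with hfdef
  have hq1' : (0:ℝ) < 1 - q := by linarith
  -- basic facts about the factors
  have hfac_nonneg : ∀ k, 1 ≤ k → ∀ ω, 0 ≤ f k ω := by
    intro k hk ω
    obtain ⟨hγl, hγu⟩ := hγrange k hk ω
    rcases hbin k ω with h | h <;>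
      simp only [hfdef, h, zero_mul, one_mul, sub_zero, sub_self, zero_add, add_zero, mul_zero]
    · exact div_nonneg (by linarith) hq1'.le
    · exact div_nonneg (by linarith) hq0.le
  have hfac_le : ∀ k, 1 ≤ k → ∀ ω, f k ω ≤ 1 / q := by
    intro k hk ω
    obtain ⟨hγl, hγu⟩ := hγrange k hk ω
    have h1q : (1:ℝ) ≤ 1 / q := by rw [le_div_iff₀ hq0]; linarith
    rcases hbin k ω with h | h <;>
      simp only [hfdef, h, zero_mul, one_mul, sub_zero, sub_self, zero_add, add_zero, mul_zero]
    · exact le_trans (by rw [div_le_one hq1']; linarith) h1q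
    · exact (div_le_div_iff_of_pos_right hq0).mpr (by linarith)
  -- nonnegativity and boundedness of M
  have hMnn : ∀ t ω, 0 ≤ M t ω := by
    intro t ω
    rw [hM]
    exact Finset.prod_nonneg fun k hk => hfac_nonneg k (hm.trans (Finset.mem_Icc.mp hk).1) ω
  have hMle : ∀ t ω, M t ω ≤ (1/q) ^ (Finset.Icc m t).card := by
    intro t ω
    rw [hM, ← Finset.prod_const]
    exact Finset.prod_le_prod
      (fun k hk => hfac_nonneg k (hm.trans (Finset.mem_Icc.mp hk).1) ω)
      (fun k hk => hfac_le k (hm.trans (Finset.mem_Icc.mp hk).1) ω)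
  -- measurability / integrability
  have hfmeas : ∀ k, 1 ≤ k → StronglyMeasurable[ℱ k] (f k) := by
    intro k hk
    have hγ : StronglyMeasurable[ℱ k] (γhat (k - 1)) :=
      (hγmeas k hk).mono (ℱ.mono (Nat.sub_le k 1))
    simp only [hfdef, div_eq_mul_inv]
    exact ((hmeas k).mul (hγ.mul_const q⁻¹)).add
      ((stronglyMeasurable_const.sub (hmeas k)).mul
        ((stronglyMeasurable_const.sub hγ).mul_const (1 - q)⁻¹))
  have hMmeas : ∀ t, StronglyMeasurable[ℱ t] (M t) := by
    intro t
    have h : M t = fun ω => ∏ k ∈ Finset.Icc m t, f k ω := funext fun ω => hM t ω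
    rw [h]
    apply Finset.stronglyMeasurable_fun_prod
    intro k hk
    exact (hfmeas k (hm.trans (Finset.mem_Icc.mp hk).1)).mono
      (ℱ.mono (Finset.mem_Icc.mp hk).2)
  have hMint : ∀ t, Integrable (M t) μ := by
    intro t
    refine integrable_of_bdd ((hMmeas t).mono (ℱ.le t)).aestronglyMeasurable
      (C := (1/q) ^ (Finset.Icc m t).card) fun ω => ?_
    rw [abs_le]
    exact ⟨le_trans (neg_nonpos.mpr (by positivity)) (hMnn t ω), hMle t ω⟩
  -- the one-step supermartingale inequality
  have hstep : ∀ t, μ[M (t+1) | ℱ t] ≤ᵐ[μ] M t := by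
    intro t
    by_cases ht : m ≤ t + 1
    · -- decompose M (t+1) = G * Y (t+1) + H
      have hγt : StronglyMeasurable[ℱ t] (γhat t) :=
        hγmeas (t+1) (Nat.le_add_left 1 t)
      have hγtr : ∀ ω, γhat t ω ∈ Set.Icc q (1 - c) :=
        hγrange (t+1) (Nat.le_add_left 1 t)
      set A : Ω → ℝ := fun ω => γhat t ω / q with hA
      set B : Ω → ℝ := fun ω => (1 - γhat t ω) / (1 - q) with hB
      set G : Ω → ℝ := fun ω => M t ω * (A ω - B ω) with hG
      set H : Ω → ℝ := fun ω => M t ω * B ω with hH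
      have hMsucc : M (t+1) = G * Y (t+1) + H := by
        funext ω
        have : M (t+1) ω = M t ω * f (t+1) ω := by
          rw [hM (t+1), hM t, Finset.prod_Icc_succ_top ht]
        rw [this]
        simp only [hfdef, hG, hH, hA, hB, Pi.add_apply, Pi.mul_apply, Nat.add_sub_cancel]
        ring
      -- bounds on the pieces
      have hAbd : ∀ ω, 0 ≤ A ω ∧ A ω ≤ 1 / q := by
        intro ω
        obtain ⟨h1, h2⟩ := hγtr ω
        constructor
        · exact div_nonneg (by linarith) hq0.le
        · exact (div_le_div_iff_of_pos_right hq0).mpr (by linarith)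
      have hBbd : ∀ ω, 0 ≤ B ω ∧ B ω ≤ 1 := by
        intro ω
        obtain ⟨h1, h2⟩ := hγtr ω
        constructor
        · exact div_nonneg (by linarith) hq1'.le
        · rw [div_le_one hq1']; linarith
      have hGbd : ∀ ω, |G ω| ≤ (1/q) ^ (Finset.Icc m t).card * (1/q + 1) := by
        intro ω
        obtain ⟨hA1, hA2⟩ := hAbd ω
        obtain ⟨hB1, hB2⟩ := hBbd ω
        have h1 := hMnn t ω
        have h2 := hMle t ω
        have hq' : (0:ℝ) ≤ 1/q := by positivity
        have hGe : G ω = M t ω * (A ω - B ω) := rfl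
        have habs : |A ω - B ω| ≤ 1/q + 1 := by
          rw [abs_sub_le_iff]; constructor <;> linarith
        rw [hGe, abs_mul, abs_of_nonneg h1]
        exact mul_le_mul h2 habs (abs_nonneg _) (by positivity)
      have hHbd : ∀ ω, |H ω| ≤ (1/q) ^ (Finset.Icc m t).card := by
        intro ω
        obtain ⟨hB1, hB2⟩ := hBbd ω
        have h1 := hMnn t ω
        have h2 := hMle t ω
        have hHe : H ω = M t ω * B ω := rfl
        rw [hHe, abs_mul, abs_of_nonneg h1, abs_of_nonneg hB1]
        calc M t ω * B ω ≤ (1/q) ^ (Finset.Icc m t).card * 1 :=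
              mul_le_mul h2 hB2 hB1 (by positivity)
          _ = (1/q) ^ (Finset.Icc m t).card := mul_one _
      -- measurability of the pieces w.r.t. ℱ t
      have hAm : StronglyMeasurable[ℱ t] A := by
        rw [hA]; simp only [div_eq_mul_inv]; exact hγt.mul_const q⁻¹
      have hBm : StronglyMeasurable[ℱ t] B := by
        rw [hB]; simp only [div_eq_mul_inv]
        exact (stronglyMeasurable_const.sub hγt).mul_const (1 - q)⁻¹
      have hGm : StronglyMeasurable[ℱ t] G := (hMmeas t).mul (hAm.sub hBm)
      have hHm : StronglyMeasurable[ℱ t] H := (hMmeas t).mul hBm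
      -- integrability
      have hYint : Integrable (Y (t+1)) μ := by
        refine integrable_of_bdd ((hmeas (t+1)).mono (ℱ.le (t+1))).aestronglyMeasurable
          (C := 1) fun ω => ?_
        rcases hbin (t+1) ω with h | h <;> simp [h]
      have hGYint : Integrable (G * Y (t+1)) μ := by
        refine integrable_of_bdd
          (((hGm.mono (ℱ.le t)).mul ((hmeas (t+1)).mono (ℱ.le (t+1)))).aestronglyMeasurable)
          (C := (1/q) ^ (Finset.Icc m t).card * (1/q + 1)) fun ω => ?_
        have h1 := hGbd ω
        have h2 : |Y (t+1) ω| ≤ 1 := by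
          rcases hbin (t+1) ω with h | h <;> simp [h]
        calc |(G * Y (t+1)) ω| = |G ω| * |Y (t+1) ω| := abs_mul _ _
          _ ≤ |G ω| * 1 := by
              exact mul_le_mul_of_nonneg_left h2 (abs_nonneg _)
          _ ≤ (1/q) ^ (Finset.Icc m t).card * (1/q + 1) := by rw [mul_one]; exact h1
      have hHint : Integrable H μ :=
        integrable_of_bdd ((hHm.mono (ℱ.le t)).aestronglyMeasurable) hHbd
      -- compute the conditional expectation
      have hce : μ[G * Y (t+1) + H | ℱ t] =ᵐ[μ]
          fun ω => G ω * (μ[Y (t+1) | ℱ t]) ω + H ω := by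
        refine (condExp_add hGYint hHint (ℱ t)).trans ?_
        have h1 : μ[G * Y (t+1) | ℱ t] =ᵐ[μ] G * μ[Y (t+1) | ℱ t] :=
          condExp_mul_of_stronglyMeasurable_left hGm hGYint hYint
        rw [condExp_of_stronglyMeasurable (ℱ.le t) hHm hHint]
        filter_upwards [h1] with ω h1ω
        simp only [Pi.add_apply]
        rw [h1ω, Pi.mul_apply]
      -- conclude
      have hnt : ∀ᵐ ω ∂μ, (μ[Y (t+1) | ℱ t]) ω ≤ q := hnull (t+1) ht
      rw [hMsucc]
      refine hce.le.trans ?_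
      filter_upwards [hnt] with ω hω
      obtain ⟨hγl, hγu⟩ := hγtr ω
      have hABge : 0 ≤ A ω - B ω := by
        simp only [hA, hB]
        rw [sub_nonneg, div_le_div_iff₀ hq1' hq0]
        nlinarith
      have hkey : (A ω - B ω) * q + B ω = 1 := by
        simp only [hA, hB]
        field_simp
        ring
      have h1 := hMnn t ω
      calc G ω * (μ[Y (t+1) | ℱ t]) ω + H ω
          = M t ω * ((A ω - B ω) * (μ[Y (t+1) | ℱ t]) ω + B ω) := by
            simp only [hG, hH]; ring
        _ ≤ M t ω * ((A ω - B ω) * q + B ω) := by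
            apply mul_le_mul_of_nonneg_left _ h1
            have := mul_le_mul_of_nonneg_left hω hABge
            linarith
        _ = M t ω := by rw [hkey, mul_one]
    · -- before the budget time both sides are the constant 1
      have h1 : M (t+1) = fun _ => (1:ℝ) := by
        funext ω
        rw [hM]
        rw [Finset.Icc_eq_empty ht, Finset.prod_empty]
      have h2 : M t = fun _ => (1:ℝ) := by
        funext ω
        rw [hM]
        rw [Finset.Icc_eq_empty (by omega), Finset.prod_empty]
      rw [h1, h2, condExp_const (ℱ.le t) (1:ℝ)]
  have hadp : StronglyAdapted ℱ M := fun t => hMmeas t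
  have smg : Supermartingale M ℱ μ := supermartingale_nat hadp hMint hstep
  refine ⟨smg, hMnn, fun t => ?_⟩
  have h0 : M 0 = fun _ => (1:ℝ) := by
    funext ω
    rw [hM]
    rw [Finset.Icc_eq_empty (by omega), Finset.prod_empty]
  calc (∫ ω, M t ω ∂μ) = ∫ ω, (μ[M t | ℱ 0]) ω ∂μ :=
        (integral_condExp (ℱ.le 0)).symm
    _ ≤ ∫ ω, M 0 ω ∂μ :=
        integral_mono_ae integrable_condExp (hMint 0) (smg.condExp_ae_le (Nat.zero_le t))
    _ = 1 := by rw [h0]; simp
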